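/- Let V be a complex inner product space and let Z₁, Z₂, Z₃ : V → V be linear maps that are skew-symmetric, i.e. ⟨Z_i u, w⟩ = −⟨u, Z_i w⟩ for all u, w ∈ V and i = 1,2,3, and that satisfy the commutation relations Z₁Z₂ − Z₂Z₁ = Z₃, Z₂Z₃ − Z₃Z₂ = Z₁, Z₃Z₁ − Z₁Z₃ = Z₂. Then for every f ∈ V and every c ∈ ℝ: ‖(Z₁² + Z₂² + Z₃²)f + c·f‖² = Σ_{i,j=1}^{3} ‖Z_j Z_i f‖² − 2c·Σ_{i=1}^{3} ‖Z_i f‖² + c²·‖f‖². -/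

import Mathlib

/-- For skew-symmetric operators `Z₁, Z₂, Z₃` on a complex inner product
space satisfying the `so(3)` commutation relations, one has for all `f` and real `c`:
`‖(Z₁² + Z₂² + Z₃²)f + c•f‖² = Σ_{i,j} ‖Z_j Z_i f‖² - 2c Σ_i ‖Z_i f‖² + c² ‖f‖²`. -/
theorem stmt_8 (V : Type*) [NormedAddCommGroup V] [InnerProductSpace ℂ V]
    (Z : Fin 3 → V →ₗ[ℂ] V)
    (hskew : ∀ (i : Fin 3) (u w : V),
      (@inner ℂ V _ (Z i u) w) = -(@inner ℂ V _ u (Z i w)))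
    (h12 : ∀ u : V, Z 0 (Z 1 u) - Z 1 (Z 0 u) = Z 2 u)
    (h23 : ∀ u : V, Z 1 (Z 2 u) - Z 2 (Z 1 u) = Z 0 u)
    (h31 : ∀ u : V, Z 2 (Z 0 u) - Z 0 (Z 2 u) = Z 1 u)
    (f : V) (c : ℝ) :
    ‖(∑ i : Fin 3, Z i (Z i f)) + (c : ℂ) • f‖ ^ 2 =
      (∑ i : Fin 3, ∑ j : Fin 3, ‖Z j (Z i f)‖ ^ 2)
        - 2 * c * (∑ i : Fin 3, ‖Z i f‖ ^ 2) + c ^ 2 * ‖f‖ ^ 2 := by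
  have e12 : ∀ u : V, Z 1 (Z 0 u) = Z 0 (Z 1 u) - Z 2 u := by
    intro u; have h := h12 u; rw [sub_eq_iff_eq_add] at h; rw [h]; abel
  have e21 : ∀ u : V, Z 0 (Z 1 u) = Z 1 (Z 0 u) + Z 2 u := by
    intro u; have h := h12 u; rw [sub_eq_iff_eq_add] at h; rw [h]; abel
  have e23 : ∀ u : V, Z 2 (Z 1 u) = Z 1 (Z 2 u) - Z 0 u := by
    intro u; have h := h23 u; rw [sub_eq_iff_eq_add] at h; rw [h]; abel
  have e32 : ∀ u : V, Z 1 (Z 2 u) = Z 2 (Z 1 u) + Z 0 u := by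
    intro u; have h := h23 u; rw [sub_eq_iff_eq_add] at h; rw [h]; abel
  have e31 : ∀ u : V, Z 0 (Z 2 u) = Z 2 (Z 0 u) - Z 1 u := by
    intro u; have h := h31 u; rw [sub_eq_iff_eq_add] at h; rw [h]; abel
  have e13 : ∀ u : V, Z 2 (Z 0 u) = Z 0 (Z 2 u) + Z 1 u := by
    intro u; have h := h31 u; rw [sub_eq_iff_eq_add] at h; rw [h]; abel
  set A : V := ∑ i : Fin 3, Z i (Z i f) with hA
  have key0 : Z 0 A = ∑ j : Fin 3, Z j (Z j (Z 0 f)) := by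
    rw [hA]; simp only [Fin.sum_univ_three, e12, e13, map_add, map_sub]; abel
  have key1 : Z 1 A = ∑ j : Fin 3, Z j (Z j (Z 1 f)) := by
    rw [hA]; simp only [Fin.sum_univ_three, e21, e23, map_add, map_sub]; abel
  have key2 : Z 2 A = ∑ j : Fin 3, Z j (Z j (Z 2 f)) := by
    rw [hA]; simp only [Fin.sum_univ_three, e32, e31, map_add, map_sub]; abel
  have key : ∀ i : Fin 3, Z i A = ∑ j : Fin 3, Z j (Z j (Z i f)) := by
    intro i
    fin_cases i
    · exact key0
    · exact key1
    · exact key2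
  have hAA : (inner ℂ A A : ℂ) = ∑ i : Fin 3, ∑ j : Fin 3, ((‖Z j (Z i f)‖ : ℂ))^2 := by
    rw [hA, sum_inner]
    refine Finset.sum_congr rfl fun i _ => ?_
    rw [← hA, hskew i (Z i f) A, key i, inner_sum, ← Finset.sum_neg_distrib]
    refine Finset.sum_congr rfl fun j _ => ?_
    rw [← hskew j (Z i f) (Z j (Z i f)), inner_self_eq_norm_sq_to_K]
    norm_cast
  have hAf : (inner ℂ A f : ℂ) = -∑ i : Fin 3, ((‖Z i f‖ : ℂ))^2 := by
    rw [hA, sum_inner, ← Finset.sum_neg_distrib]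
    refine Finset.sum_congr rfl fun i _ => ?_
    rw [hskew i (Z i f) f, inner_self_eq_norm_sq_to_K]
    norm_cast
  have h1 : ‖A‖ ^ 2 = ∑ i : Fin 3, ∑ j : Fin 3, ‖Z j (Z i f)‖ ^ 2 := by
    have := inner_self_eq_norm_sq (𝕜 := ℂ) A
    rw [hAA] at this
    rw [← this]
    simp [← Complex.ofReal_pow]
  have h2 : RCLike.re (inner ℂ A ((c:ℂ) • f) : ℂ) = -(c * ∑ i : Fin 3, ‖Z i f‖ ^ 2) := by
    rw [inner_smul_right, hAf]
    simp [← Complex.ofReal_pow, Finset.mul_sum]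
  rw [norm_add_sq (𝕜 := ℂ), h2]
  have h3 : ‖(c : ℂ) • f‖ ^ 2 = c ^ 2 * ‖f‖ ^ 2 := by
    rw [norm_smul, Complex.norm_real, Real.norm_eq_abs, mul_pow, sq_abs]
  rw [h3, h1]
  ring
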